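/- arXiv:2401.14600 — 7 statements merged into one kernel-verified Lean document; each statement's English description precedes it below -/
import Mathlib

section
/- If θ is a regular cardinal and A is a set with |A|^{<θ} = |A|, then the relational systems C_{[A]^{<θ}} = ⟨A, [A]^{<θ}, ∈⟩ and [A]^{<θ} = ⟨[A]^{<θ}, [A]^{<θ}, ⊆⟩ are Tukey equivalent. -/
open Cardinal

universe u

lemma stmt_4_aux {A : Type u} (θ : Cardinal.{u}) (hθ : θ.IsRegular)
    (hA : #A ^< θ = #A) (hle : θ ≤ #A) :
    #{S : Set A // #S < θ} ≤ #A := by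
  have hAinf : ℵ₀ ≤ #A := hθ.aleph0_le.trans hle
  have : Infinite A := Cardinal.infinite_iff.2 hAinf
  set ι := θ.ord.ToType with hι
  have hmkι : #ι = θ := Cardinal.mk_ord_toType θ
  set g : ι → Cardinal.{u} := fun i => ((((Ordinal.ToType.mk (o := θ.ord))).symm i).1).card
    with hg
  have hglt : ∀ i, g i < θ := fun i =>
    Cardinal.lt_ord.1 (((Ordinal.ToType.mk (o := θ.ord))).symm i).2
  -- an injection from our subtype into a sigma type
  set F : {S : Set A // #S < θ} → Σ i : ι, {S : Set A // #S ≤ g i} := fun S =>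
    ⟨(Ordinal.ToType.mk (o := θ.ord)) ⟨(#S.1).ord, Cardinal.ord_lt_ord.2 S.2⟩,
      ⟨S.1, by simp [hg, Cardinal.card_ord]⟩⟩ with hF
  have hFinj : Function.Injective F := by
    intro S T h
    exact Subtype.ext (congrArg (fun p : Σ i : ι, {S : Set A // #S ≤ g i} => p.2.1) h)
  calc #{S : Set A // #S < θ} ≤ #(Σ i : ι, {S : Set A // #S ≤ g i}) :=
        Cardinal.mk_le_of_injective hFinj
    _ = Cardinal.sum (fun i : ι => #{S : Set A // #S ≤ g i}) := Cardinal.mk_sigma _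
    _ ≤ Cardinal.sum (fun _ : ι => #A) := by
        apply Cardinal.sum_le_sum
        intro i
        calc #{S : Set A // #S ≤ g i} ≤ #A ^ g i :=
              Cardinal.mk_bounded_set_le_of_infinite A (g i)
          _ ≤ #A ^< θ := Cardinal.le_powerlt _ (hglt i)
          _ = #A := hA
    _ = #ι * #A := (Cardinal.sum_const' _ _)
    _ = θ * #A := by rw [hmkι]
    _ ≤ #A := by
        rw [Cardinal.mul_eq_max hθ.aleph0_le hAinf]
        exact max_le hle le_rfl

/-- If `θ` is regular and `|A|^{<θ} = |A|`, then `C_{[A]^{<θ}} = ⟨A, [A]^{<θ}, ∈⟩` and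
`[A]^{<θ} = ⟨[A]^{<θ}, [A]^{<θ}, ⊆⟩` are Tukey equivalent (Tukey connections in both
directions). -/
theorem stmt_4 {A : Type u} (θ : Cardinal.{u}) (hθ : θ.IsRegular)
    (hA : #A ^< θ = #A) :
    (∃ (Φm : A → {S : Set A // #S < θ})
        (Φp : {S : Set A // #S < θ} → {S : Set A // #S < θ}),
        ∀ (a : A) (B : {S : Set A // #S < θ}), (Φm a).1 ⊆ B.1 → a ∈ (Φp B).1)
    ∧ (∃ (Ψm : {S : Set A // #S < θ} → A)
        (Ψp : {S : Set A // #S < θ} → {S : Set A // #S < θ}),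
        ∀ (S B : {S : Set A // #S < θ}), Ψm S ∈ B.1 → S.1 ⊆ (Ψp B).1) := by
  have hθ0 : 0 < θ := hθ.pos
  have hone : (1 : Cardinal.{u}) < θ := Cardinal.one_lt_aleph0.trans_le hθ.aleph0_le
  -- A is nonempty
  have hAne : Nonempty A := by
    rw [← Cardinal.mk_ne_zero_iff, ← hA]
    intro h0
    have : (#A ^ (0 : Cardinal.{u})) ≤ #A ^< θ := Cardinal.le_powerlt _ hθ0
    rw [Cardinal.power_zero, h0] at this
    exact (zero_lt_one).not_ge this
  constructor
  · -- first direction: a ↦ {a}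
    refine ⟨fun a => ⟨{a}, by simpa using hone⟩, id, ?_⟩
    intro a B h
    exact h rfl
  · -- second direction
    rcases lt_or_ge (#A) θ with hcase | hcase
    · -- small A: Ψp is constantly univ
      obtain ⟨a0⟩ := hAne
      refine ⟨fun _ => a0, fun _ => ⟨Set.univ, by simpa using hcase⟩, ?_⟩
      intro S B _
      exact Set.subset_univ _
    · -- large A: use an injection from [A]^{<θ} into A
      obtain ⟨f⟩ := Cardinal.le_def _ _ |>.1 (stmt_4_aux θ hθ hA hcase)
      refine ⟨f, fun B => ⟨⋃ T : {T : {S : Set A // #S < θ} // f T ∈ B.1}, T.1.1, ?_⟩, ?_⟩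
      · -- cardinality of the union is < θ
        apply lt_of_le_of_lt Cardinal.mk_iUnion_le_sum_mk
        apply Cardinal.sum_lt_of_isRegular hθ _ (fun T => T.1.2)
        have : #{T : {S : Set A // #S < θ} // f T ∈ B.1} ≤ #B.1 := by
          apply Cardinal.mk_le_of_injective (f := fun T => (⟨f T.1, T.2⟩ : B.1))
          intro T T' h
          exact Subtype.ext (f.injective (congrArg Subtype.val h))
        exact this.trans_lt B.2
      · intro S B h
        exact Set.subset_iUnion (fun T : {T : {S : Set A // #S < θ} // f T ∈ B.1} => T.1.1)
          ⟨S, h⟩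
end

section
/- The following ZFC inequality holds: 𝔢 ≤ non(M), i.e., every non-meager set of functions in ω^ω contains, for every predictor π, a function evading π; equivalently, the set of functions predicted by a fixed predictor π is meager in ω^ω. -/
open Cardinal

/-- The predictor `(D, π)` predicts `f` if `f(n) = π_n(f↾n)` for all but finitely many
`n ∈ D`. -/
def Predicts (D : Set ℕ) (π : (n : ℕ) → (Fin n → ℕ) → ℕ) (f : ℕ → ℕ) : Prop :=
  {n | n ∈ D ∧ f n ≠ π n (fun i => f i)}.Finite

lemma predicted_meagre (D : Set ℕ) (hD : D.Infinite) (π : (n : ℕ) → (Fin n → ℕ) → ℕ) :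
    IsMeagre {f : ℕ → ℕ | Predicts D π f} := by
  set A : ℕ → Set (ℕ → ℕ) :=
    fun m => {f | ∀ n, n ∈ D → m ≤ n → f n = π n (fun i => f i)} with hA
  have hclosed : ∀ m, IsClosed (A m) := by
    intro m
    have : A m = ⋂ n, {f : ℕ → ℕ | n ∈ D → m ≤ n → f n = π n (fun i => f i)} := by
      ext f; simp [hA, Set.mem_iInter]
    rw [this]
    refine isClosed_iInter fun n => ?_
    by_cases hn : n ∈ D ∧ m ≤ n
    · have : {f : ℕ → ℕ | n ∈ D → m ≤ n → f n = π n (fun i => f i)}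
          = {f : ℕ → ℕ | f n = π n (fun i => f i)} := by
        ext f; simp [hn.1, hn.2]
      rw [this]
      exact isClosed_eq (continuous_apply n)
        ((continuous_of_discreteTopology).comp
          (continuous_pi fun i : Fin n => continuous_apply (i : ℕ)))
    · have : {f : ℕ → ℕ | n ∈ D → m ≤ n → f n = π n (fun i => f i)} = Set.univ := by
        ext f; simp only [Set.mem_setOf_eq, Set.mem_univ, iff_true]
        intro h1 h2; exact absurd ⟨h1, h2⟩ hn
      rw [this]; exact isClosed_univ
  have hint : ∀ m, interior (A m) = ∅ := by
    intro m
    rw [Set.eq_empty_iff_forall_notMem]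
    intro f hf
    obtain ⟨I, u, hu, hIsub⟩ := isOpen_pi_iff.mp isOpen_interior f hf
    classical
    have hfin : ((↑I : Set ℕ) ∪ Set.Iio m).Finite := I.finite_toSet.union (Set.finite_Iio m)
    obtain ⟨n, hnD, hnI⟩ := (hD.diff hfin).nonempty
    simp only [Set.mem_union, Finset.mem_coe, Set.mem_Iio, not_or, not_lt] at hnI
    obtain ⟨hnI1, hnm⟩ := hnI
    set g : ℕ → ℕ := Function.update f n (π n (fun i : Fin n => f i) + 1) with hg
    have hgA : g ∈ A m := interior_subset (hIsub (by
      intro i hi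
      have hne : i ≠ n := fun h => hnI1 (h ▸ hi)
      simp only [hg, Function.update_of_ne hne]
      exact (hu i hi).2))
    have hgn : g n = π n (fun i : Fin n => g i) := hgA n hnD hnm
    have hrestr : (fun i : Fin n => g i) = (fun i : Fin n => f i) := by
      funext i
      exact Function.update_of_ne (Nat.ne_of_lt i.isLt) _ f
    rw [hrestr] at hgn
    simp [hg, Function.update_self] at hgn
  have hmeagre : ∀ m, IsMeagre (A m) := by
    intro m
    rw [IsMeagre]
    refine residual_of_dense_open (hclosed m).isOpen_compl ?_
    rw [← interior_eq_empty_iff_dense_compl]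
    exact hint m
  have hsub : {f : ℕ → ℕ | Predicts D π f} ⊆ ⋃ m, A m := by
    intro f hf
    obtain ⟨m, hm⟩ := hf.bddAbove
    refine Set.mem_iUnion.mpr ⟨m + 1, fun n hn hmn => ?_⟩
    by_contra hne
    have : n ∈ {k | k ∈ D ∧ f k ≠ π k (fun i => f i)} := ⟨hn, hne⟩
    have := hm this
    omega
  exact (isMeagre_iUnion hmeagre).mono hsub

/-- The evasion number `𝔢` is at most `non(M)`, the least size of a non-meager subset of
Baire space `ℕ → ℕ`. -/
theorem stmt_5 :
    sInf {c : Cardinal | ∃ F : Set (ℕ → ℕ),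
        (∀ (D : Set ℕ), D.Infinite → ∀ π : (n : ℕ) → (Fin n → ℕ) → ℕ,
          ∃ f ∈ F, ¬ Predicts D π f) ∧ c = #F}
      ≤ sInf {c : Cardinal | ∃ S : Set (ℕ → ℕ), ¬ IsMeagre S ∧ c = #S} := by
  have hsub : {c : Cardinal | ∃ S : Set (ℕ → ℕ), ¬ IsMeagre S ∧ c = #S} ⊆
      {c : Cardinal | ∃ F : Set (ℕ → ℕ),
        (∀ (D : Set ℕ), D.Infinite → ∀ π : (n : ℕ) → (Fin n → ℕ) → ℕ,
          ∃ f ∈ F, ¬ Predicts D π f) ∧ c = #F} := by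
    rintro c ⟨S, hS, rfl⟩
    refine ⟨S, fun D hD π => ?_, rfl⟩
    by_contra h
    push_neg at h
    exact hS ((predicted_meagre D hD π).mono fun f hf => h f hf)
  have hne : {c : Cardinal | ∃ S : Set (ℕ → ℕ), ¬ IsMeagre S ∧ c = #S}.Nonempty := by
    refine ⟨#(Set.univ : Set (ℕ → ℕ)), Set.univ, ?_, rfl⟩
    intro h
    rw [IsMeagre, Set.compl_univ] at h
    have := dense_of_mem_residual h
    rw [dense_iff_closure_eq, closure_empty] at this
    exact (Set.univ_nonempty (α := ℕ → ℕ)).ne_empty this.symm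
  exact csInf_le_csInf (OrderBot.bddBelow _) hne hsub
end

section
/- Let θ ≤ μ ≤ χ be infinite cardinals with χ ≤ 2^μ. Then there is a family F of functions from χ to μ of cardinality at most μ^{<θ} such that every partial function from χ to μ with domain of size < θ extends to a total function in F. -/
/-!
Since `#α ≤ 2 ^ #β`, points of `α` can be coded as subsets of `β`. Fewer than `θ` such subsets
are already told apart by their traces on some `I ⊆ β` with `#I < θ` (one separating point per
pair), so a partial function with small domain factors through `x ↦ x ∩ I` and is read off from
a table `g : W → β` on a small family `W` of subsets of `I`. There are at most `#β ^< θ` such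
tables, because `(2 ^ #I) ^< θ ≤ #β ^< θ`.
-/

open Cardinal Set Function

namespace Cardinal

theorem exists_mk_Iio_eq_of_lt {c θ : Cardinal.{u}} (h : c < θ) :
    ∃ i : θ.ord.ToType, #(Iio i) = c := by
  let o : Iio θ.ord := ⟨c.ord, ord_lt_ord.2 h⟩
  have hi : Ordinal.typein LT.lt (Ordinal.ToType.mk o) = c.ord := by
    rw [← Ordinal.ToType.mk_symm_apply_coe, RelIso.symm_apply_apply]
  refine ⟨Ordinal.ToType.mk o, ?_⟩
  rw [← card_ord c, ← hi, Ordinal.card_typein]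
  rfl

theorem mk_setOf_mk_lt_le (γ : Type u) (θ : Cardinal.{u}) :
    #{s : Set γ // #s < θ} ≤ θ * #γ ^< θ := by
  let toSet : (Σ i : θ.ord.ToType, Iio i → γ) → {s : Set γ // #s < θ} :=
    fun f => ⟨range f.2, mk_range_le.trans_lt (by simpa using mk_Iio_lt f.1)⟩
  have hsurj : Surjective toSet := by
    rintro ⟨s, hs⟩
    obtain ⟨i, hi⟩ := exists_mk_Iio_eq_of_lt hs
    obtain ⟨e⟩ := Cardinal.eq.1 hi
    exact ⟨⟨i, (↑) ∘ e⟩, Subtype.ext (by simp [toSet, EquivLike.range_comp])⟩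
  calc #{s : Set γ // #s < θ} ≤ #(Σ i : θ.ord.ToType, Iio i → γ) := mk_le_of_surjective hsurj
    _ = sum fun i : θ.ord.ToType => #γ ^ #(Iio i) := by simp only [mk_sigma, power_def]
    _ ≤ sum fun _ : θ.ord.ToType => #γ ^< θ :=
      sum_le_sum _ _ fun i => le_powerlt _ (by simpa using mk_Iio_lt i)
    _ = θ * #γ ^< θ := by rw [sum_const', mk_ord_toType]

theorem mk_sigma_le_of_le {ι : Type u} {f : ι → Type u} {κ : Cardinal.{u}} (hκ : ℵ₀ ≤ κ)
    (hι : #ι ≤ κ) (hf : ∀ i, #(f i) ≤ κ) : #(Σ i, f i) ≤ κ :=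
  calc #(Σ i, f i) ≤ sum fun _ : ι => κ := by rw [mk_sigma]; exact sum_le_sum _ _ hf
    _ = #ι * κ := sum_const' _ _
    _ ≤ κ := mul_le_of_le hκ hι le_rfl

theorem two_power_powerlt_le {a b θ : Cardinal.{u}} (hθ : ℵ₀ ≤ θ) (ha : a < θ) (hb : 2 ≤ b) :
    (2 ^ a) ^< θ ≤ b ^< θ :=
  powerlt_le.2 fun c hc =>
    calc (2 ^ a) ^ c = 2 ^ (a * c) := (power_mul ..).symm
      _ ≤ b ^ (a * c) := power_le_power_right hb
      _ ≤ b ^< θ := le_powerlt _ (mul_lt_of_lt hθ ha hc)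

end Cardinal

section TraceLookup

variable {α β : Type u}

theorem exists_small_set_injOn_preimage_val {e : α → Set β} {s : Set α} {θ : Cardinal.{u}}
    (hθ : ℵ₀ ≤ θ) (hs : #s < θ) (he : InjOn e s) :
    ∃ I : Set β, #I < θ ∧ InjOn (fun x => ((↑) : I → β) ⁻¹' e x) s := by
  have hsep : ∀ q : {q : s × s // q.1 ≠ q.2}, ∃ b, ¬(b ∈ e q.1.1 ↔ b ∈ e q.1.2) := by
    rintro ⟨⟨x, y⟩, hxy⟩
    by_contra! h
    exact hxy (Subtype.ext (he x.2 y.2 (Set.ext h)))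
  choose w hw using hsep
  refine ⟨range w, ?_, fun x hx y hy hxy => ?_⟩
  · calc #(range w) ≤ #{q : s × s // q.1 ≠ q.2} := mk_range_le
      _ ≤ #(s × s) := mk_subtype_le _
      _ = #s * #s := by rw [mk_prod, lift_id]
      _ < θ := mul_lt_of_lt hθ hs hs
  · by_contra hne
    let q : {q : s × s // q.1 ≠ q.2} := ⟨(⟨x, hx⟩, ⟨y, hy⟩), fun h => hne (congrArg Subtype.val h)⟩
    exact hw q (Set.ext_iff.1 hxy ⟨w q, q, rfl⟩)

open Classical in
noncomputable def traceLookup (e : α → Set β) (b : β) {I : Set β} (W : Set (Set I)) (g : W → β)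
    (x : α) : β :=
  if h : (↑) ⁻¹' e x ∈ W then g ⟨_, h⟩ else b

theorem exists_traceLookup_eqOn {e : α → Set β} {I : Set β} {s : Set α}
    (hinj : InjOn (fun x => ((↑) : I → β) ⁻¹' e x) s) (b : β) (p : α → β) :
    ∃ W : Set (Set I), #W ≤ #s ∧ ∃ g : W → β, EqOn (traceLookup e b W g) p s := by
  refine ⟨(fun x => ((↑) : I → β) ⁻¹' e x) '' s, mk_image_le, fun w => p w.2.choose,
    fun x hx => ?_⟩
  rw [traceLookup, dif_pos (mem_image_of_mem _ hx)]
  obtain ⟨hy, hyx⟩ := (mem_image_of_mem _ hx).choose_spec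
  exact congrArg p (hinj hy hx hyx)

def TraceTable (β : Type u) (θ : Cardinal.{u}) : Type u :=
  Σ I : {I : Set β // #I < θ}, Σ W : {W : Set (Set I) // #W < θ}, (W.1 → β)

theorem mk_traceTable_le {θ : Cardinal.{u}} (hθ : ℵ₀ ≤ θ) (hθβ : θ ≤ #β) :
    #(TraceTable β θ) ≤ #β ^< θ := by
  have hβκ : #β ≤ #β ^< θ := by
    simpa using le_powerlt #β (one_lt_aleph0.trans_le hθ)
  have hθκ : θ ≤ #β ^< θ := hθβ.trans hβκ
  have hκ : ℵ₀ ≤ #β ^< θ := hθ.trans hθκ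
  have h2β : 2 ≤ #β := (natCast_lt_aleph0 (n := 2)).le.trans (hθ.trans hθβ)
  refine mk_sigma_le_of_le hκ ?_ fun I => mk_sigma_le_of_le hκ ?_ fun W => ?_
  · exact (mk_setOf_mk_lt_le β θ).trans (mul_le_of_le hκ hθκ le_rfl)
  · refine (mk_setOf_mk_lt_le _ θ).trans (mul_le_of_le hκ hθκ ?_)
    rw [mk_set]
    exact two_power_powerlt_le hθ I.2 h2β
  · rw [← power_def]
    exact le_powerlt _ W.2

end TraceLookup

theorem stmt_9_general {α β : Type u} (θ : Cardinal.{u}) (hθ : ℵ₀ ≤ θ)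
    (hθμ : θ ≤ #β) (hχ : #α ≤ 2 ^ #β) :
    ∃ F : Set (α → β), #F ≤ #β ^< θ ∧
      ∀ s : Set α, #s < θ → ∀ p : α → β, ∃ f ∈ F, ∀ x ∈ s, f x = p x := by
  obtain ⟨e⟩ : Nonempty (α ↪ Set β) := by rwa [← le_def, mk_set]
  obtain ⟨b⟩ : Nonempty β := mk_ne_zero_iff.1 (aleph0_pos.trans_le (hθ.trans hθμ)).ne'
  refine ⟨range fun t : TraceTable β θ => traceLookup e b t.2.1.1 t.2.2,
    mk_range_le.trans (mk_traceTable_le hθ hθμ), fun s hs p => ?_⟩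
  obtain ⟨I, hI, hinj⟩ := exists_small_set_injOn_preimage_val hθ hs e.injective.injOn
  obtain ⟨W, hW, g, hg⟩ := exists_traceLookup_eqOn hinj b p
  exact ⟨_, ⟨⟨⟨I, hI⟩, ⟨W, hW.trans_lt hs⟩, g⟩, rfl⟩, hg⟩

/-- Engelking–Karłowicz: for infinite cardinals `θ ≤ μ ≤ χ ≤ 2^μ` (here `μ = #β`,
`χ = #α`), there is a family `F` of total functions `α → β` of size at most `μ^{<θ}` such
that every partial function `α ⇀ β` with domain of size `< θ` extends to a member of `F`. -/
theorem stmt_9 {α β : Type u} (θ : Cardinal.{u}) (hθ : ℵ₀ ≤ θ)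
    (hθμ : θ ≤ #β) (hμχ : #β ≤ #α) (hχ : #α ≤ 2 ^ #β) :
    ∃ F : Set (α → β), #F ≤ #β ^< θ ∧
      ∀ s : Set α, #s < θ → ∀ p : α → β, ∃ f ∈ F, ∀ x ∈ s, f x = p x :=
  stmt_9_general θ hθ hθμ hχ
end

section
/- If ℵ₁ ≤ μ ≤ |γ| ≤ 2^μ and κ = μ⁺, then for any sequence of cardinals ⟨θ_ξ : ξ < γ⟩ with each θ_ξ < κ, there exists a complete set H of guardrails of size at most μ^{ℵ₀}; that is, H ⊆ ∏_{ξ<γ} θ_ξ and every countable partial function in ∏_{ξ<γ} θ_ξ extends to a total function in H. -/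
/-!
Since `#ι ≤ 2 ^ μ`, the coordinates can be coded by an injection `g : ι → Set M` with `#M = μ`,
and since `#(θ ξ) ≤ μ`, every `θ ξ` is a surjective image of `M`. For a countable `s ⊆ ι`,
countably many points `a : ℕ → M` already separate the sets `g ξ`, `ξ ∈ s`, so each `ξ ∈ s` is
determined by its trace `a ⁻¹' g ξ ⊆ ℕ`. A function on `s` is then described by `a`, the list of
traces and a list of values in `M`, and there are only `μ ^ ℵ₀` such descriptions.
-/

open Cardinal Function

universe u

theorem exists_seq_injOn_preimage {ι M : Type*} [Nonempty M] {g : ι → Set M} (hg : Injective g)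
    {s : Set ι} (hs : s.Countable) : ∃ a : ℕ → M, s.InjOn fun ξ ↦ a ⁻¹' g ξ := by
  have separate (ξ η : ι) : ∃ x : M, (x ∈ g ξ ↔ x ∈ g η) → ξ = η := by
    by_cases h : ξ = η
    · exact ⟨Classical.arbitrary M, fun _ ↦ h⟩
    · obtain ⟨x, hx⟩ := not_forall.mp (Set.ext_iff.not.mp (hg.ne h))
      exact ⟨x, fun h' ↦ (hx h').elim⟩
  choose w hw using separate
  obtain ⟨a, ha⟩ := Set.countable_iff_exists_subset_range.mp (hs.image2 hs w)
  refine ⟨a, fun ξ hξ η hη hξη ↦ ?_⟩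
  obtain ⟨k, hk⟩ := ha (Set.mem_image2_of_mem hξ hη)
  exact hw ξ η (hk ▸ Set.ext_iff.mp hξη k)

/-- A code `(a, t, v)` consists of separating points `a`, the traces `t n` of the enumerated
coordinates on `a`, and codes `v n` of their values. -/
abbrev GuardrailCode (M : Type*) : Type _ :=
  (ℕ → M) × (ℕ → Set ℕ) × (ℕ → M)

theorem mk_guardrailCode_le {M : Type u} (hM : ℵ₀ ≤ #M) : #(GuardrailCode M) ≤ #M ^ ℵ₀ := by
  have hinf : ℵ₀ ≤ #M ^ ℵ₀ := hM.trans (self_le_power _ one_le_aleph0)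
  have hcont : ((2 : Cardinal) ^ ℵ₀) ^ ℵ₀ ≤ #M ^ ℵ₀ := by
    rw [← power_mul, aleph0_mul_aleph0]
    exact power_le_power_right (ofNat_le_aleph0.trans hM)
  simp only [mk_prod, mk_arrow, mk_set, mk_nat, lift_id, lift_aleph0, lift_power, lift_two,
    lift_uzero]
  exact mul_le_of_le hinf le_rfl (mul_le_of_le hinf hcont le_rfl)

section Guardrails

variable {ι M : Type*} {θ : ι → Type*}

def IsCompleteGuardrails (H : Set (∀ ξ, θ ξ)) : Prop :=
  ∀ s : Set ι, s.Countable → ∀ p : ∀ ξ, θ ξ, ∃ h ∈ H, ∀ ξ ∈ s, h ξ = p ξ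

noncomputable def guardrailOfCode (g : ι → Set M) (σ : ∀ ξ, M → θ ξ) (c : GuardrailCode M) :
    ∀ ξ, θ ξ :=
  fun ξ ↦ σ ξ (c.2.2 (Classical.epsilon fun n ↦ c.2.1 n = c.1 ⁻¹' g ξ))

theorem exists_guardrailOfCode_eqOn [Nonempty M] {g : ι → Set M} (hg : Injective g)
    {σ : ∀ ξ, M → θ ξ} (hσ : ∀ ξ, Surjective (σ ξ)) {s : Set ι} (hs : s.Countable)
    (p : ∀ ξ, θ ξ) : ∃ c, ∀ ξ ∈ s, guardrailOfCode g σ c ξ = p ξ := by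
  rcases isEmpty_or_nonempty ι with hι | hι
  · exact ⟨Classical.arbitrary _, fun ξ ↦ isEmptyElim ξ⟩
  obtain ⟨f, hsf⟩ := Set.countable_iff_exists_subset_range.mp hs
  obtain ⟨a, ha⟩ := exists_seq_injOn_preimage hg (Set.countable_range f)
  choose v hv using fun ξ ↦ hσ ξ (p ξ)
  refine ⟨(a, fun n ↦ a ⁻¹' g (f n), fun n ↦ v (f n)), fun ξ hξ ↦ ?_⟩
  obtain ⟨k, rfl⟩ := hsf hξ
  have htrace := Classical.epsilon_spec (p := fun n ↦ a ⁻¹' g (f n) = a ⁻¹' g (f k)) ⟨k, rfl⟩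
  show σ (f k) (v (f _)) = p (f k)
  rw [ha (Set.mem_range_self _) (Set.mem_range_self _) htrace, hv]

theorem isCompleteGuardrails_range_guardrailOfCode [Nonempty M] {g : ι → Set M}
    (hg : Injective g) {σ : ∀ ξ, M → θ ξ} (hσ : ∀ ξ, Surjective (σ ξ)) :
    IsCompleteGuardrails (Set.range (guardrailOfCode g σ)) := fun _ hs p ↦
  let ⟨c, hc⟩ := exists_guardrailOfCode_eqOn hg hσ hs p
  ⟨_, Set.mem_range_self c, hc⟩

end Guardrails

theorem stmt_10_general {ι : Type u} (θ : ι → Type u) [∀ ξ, Nonempty (θ ξ)]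
    (μ : Cardinal.{u}) (hμ : Cardinal.aleph 1 ≤ μ) (h2 : #ι ≤ 2 ^ μ)
    (hθ : ∀ ξ, #(θ ξ) < Order.succ μ) :
    ∃ H : Set (∀ ξ, θ ξ), #H ≤ μ ^ ℵ₀ ∧
      ∀ s : Set ι, s.Countable → ∀ p : ∀ ξ, θ ξ, ∃ h ∈ H, ∀ ξ ∈ s, h ξ = p ξ := by
  have hμ₀ : ℵ₀ ≤ μ := (aleph0_le_aleph 1).trans hμ
  induction μ using Cardinal.inductionOn with | mk M => ?_
  have : Nonempty M := mk_ne_zero_iff.mp (aleph0_pos.trans_le hμ₀).ne'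
  obtain ⟨g⟩ : Nonempty (ι ↪ Set M) := by rwa [← le_def, mk_set]
  have hσ (ξ : ι) : ∃ σ : M → θ ξ, Surjective σ :=
    let ⟨j⟩ := (le_def _ _).mp (Order.lt_succ_iff.mp (hθ ξ))
    ⟨invFun j, invFun_surjective j.injective⟩
  choose σ hσ using hσ
  exact ⟨_, mk_range_le.trans (mk_guardrailCode_le hμ₀),
    isCompleteGuardrails_range_guardrailOfCode g.injective hσ⟩

/-- If `ℵ₁ ≤ μ ≤ |γ| ≤ 2^μ` and `κ = μ⁺`, then for any sequence of (nonempty) sets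
`⟨θ_ξ : ξ < γ⟩` each of size `< κ` (i.e. `≤ μ`... here `#(θ ξ) < succ μ`), there is a
complete set `H ⊆ ∏_{ξ<γ} θ_ξ` of guardrails of size at most `μ^{ℵ₀}`: every countable
partial function in `∏_{ξ<γ} θ_ξ` extends to a total function in `H`. -/
theorem stmt_10 {ι : Type u} (θ : ι → Type u) [∀ ξ, Nonempty (θ ξ)]
    (μ : Cardinal.{u}) (hμ : Cardinal.aleph 1 ≤ μ) (h1 : μ ≤ #ι) (h2 : #ι ≤ 2 ^ μ)
    (hθ : ∀ ξ, #(θ ξ) < Order.succ μ) :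
    ∃ H : Set (∀ ξ, θ ξ), #H ≤ μ ^ ℵ₀ ∧
      ∀ s : Set ι, s.Countable → ∀ p : ∀ ξ, θ ξ, ∃ h ∈ H, ∀ ξ ∈ s, h ξ = p ξ :=
  stmt_10_general θ μ hμ h2 hθ
end

section
/- Let D be an ultrafilter on ω and let Q_{s,k} be a centered piece of eventually different forcing E. Define lim^D : (Q_{s,k})^ω → Q_{s,k} by lim^D⟨(s,k,φ_m)⟩_{m<ω} = (s,k,φ^∞) where j ∈ φ^∞(i) iff {m < ω : j ∈ φ_m(i)} ∈ D. Then φ^∞(i) has size at most k for every i (so lim^D is well-defined into Q_{s,k}), and: if r = (s',k',φ') ≤ lim^D⟨q_m⟩ then the set {m < ω : q_m is compatible with r} belongs to D. -/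
/-
Any finitely many elements of `φ^∞(i)` lie simultaneously in `φ_m(i)` for `D`-many, hence some,
`m`, so `|φ^∞(i)| ≤ k`. If `r ≤ (s,k,φ^∞)`, each of the finitely many new values `r.s(i)` avoids
`φ^∞(i)`, so, `D` being an ultrafilter, it avoids `φ_m(i)` for `D`-many `m`; for those `m`, `r`
and `q_m` have the common extension with stem `r.s` and side conditions `r.φ(i) ∪ φ_m(i)`.
-/

/-- A condition of eventually different forcing `𝔼`: a triple `(s,k,φ)` with
`s ∈ ω^{<ω}`, `k < ω` and `φ : ω → [ω]^{≤k}`. -/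
structure EDCond where
  s : List ℕ
  k : ℕ
  φ : ℕ → Finset ℕ
  hφ : ∀ i, (φ i).card ≤ k

/-- The order on `𝔼`: `e' ≤ e` iff `s' ⊇ s`, `k' ≥ k`, `φ'(i) ⊇ φ(i)` for all `i`, and
`s'(i) ∉ φ(i)` for all `i ∈ dom(s') \ dom(s)`. -/
def EDle (e' e : EDCond) : Prop :=
  e.s <+: e'.s ∧ e.k ≤ e'.k ∧ (∀ i, e.φ i ⊆ e'.φ i) ∧
    ∀ i, e.s.length ≤ i → i < e'.s.length → e'.s.getD i 0 ∉ e.φ i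

open Filter

section LimFinset

variable {ι α : Type*} {f : Filter ι} [f.NeBot] {φ : ι → Finset α} {k : ℕ}

lemma card_le_of_forall_eventually_mem (hφ : ∀ m, (φ m).card ≤ k) {T : Finset α}
    (hT : ∀ j ∈ T, ∀ᶠ m in f, j ∈ φ m) : T.card ≤ k := by
  obtain ⟨m, hm⟩ := (eventually_all_finset T).2 hT |>.exists
  exact (Finset.card_le_card hm).trans (hφ m)

lemma finite_setOf_eventually_mem (hφ : ∀ m, (φ m).card ≤ k) :
    {j | ∀ᶠ m in f, j ∈ φ m}.Finite := by
  by_contra h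
  obtain ⟨T, hTsub, hTcard⟩ := Set.not_finite.1 h |>.exists_subset_card_eq (k + 1)
  have := card_le_of_forall_eventually_mem hφ fun j hj => hTsub hj
  omega

variable (f φ) in
noncomputable def Filter.limFinset (hφ : ∀ m, (φ m).card ≤ k) : Finset α :=
  (finite_setOf_eventually_mem (f := f) hφ).toFinset

@[simp]
lemma Filter.mem_limFinset (hφ : ∀ m, (φ m).card ≤ k) {j : α} :
    j ∈ f.limFinset φ hφ ↔ ∀ᶠ m in f, j ∈ φ m :=
  Set.Finite.mem_toFinset _

lemma Filter.card_limFinset_le (hφ : ∀ m, (φ m).card ≤ k) : (f.limFinset φ hφ).card ≤ k :=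
  card_le_of_forall_eventually_mem hφ fun _ => (mem_limFinset hφ).1

end LimFinset

namespace EDCond

def amalgam (r q : EDCond) : EDCond :=
  ⟨r.s, r.k + q.k, fun i => r.φ i ∪ q.φ i,
    fun i => (Finset.card_union_le _ _).trans (Nat.add_le_add (r.hφ i) (q.hφ i))⟩

lemma amalgam_le_left (r q : EDCond) : EDle (r.amalgam q) r :=
  ⟨List.prefix_refl _, Nat.le_add_right _ _, fun _ => Finset.subset_union_left,
    fun _ h1 h2 => absurd h2 (Nat.not_lt.2 h1)⟩

lemma amalgam_le_right {r q : EDCond} (hs : q.s <+: r.s)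
    (hnew : ∀ i, q.s.length ≤ i → i < r.s.length → r.s.getD i 0 ∉ q.φ i) :
    EDle (r.amalgam q) q :=
  ⟨hs, Nat.le_add_left _ _, fun _ => Finset.subset_union_right, hnew⟩

end EDCond

theorem stmt_12_general (D : Ultrafilter ℕ)
    (s : List ℕ) (k : ℕ) (φs : ℕ → ℕ → Finset ℕ) (hφ : ∀ m i, (φs m i).card ≤ k) :
    ∃ (F : ℕ → Finset ℕ) (hF : ∀ i, (F i).card ≤ k),
      (∀ i, (F i : Set ℕ) = {j | {m | j ∈ φs m i} ∈ D}) ∧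
      ∀ r : EDCond, EDle r ⟨s, k, F, hF⟩ →
        {m | ∃ c : EDCond, EDle c r ∧ EDle c ⟨s, k, φs m, hφ m⟩} ∈ D := by
  let F i := (D : Filter ℕ).limFinset (φs · i) (hφ · i)
  refine ⟨F, fun i => card_limFinset_le _, fun i => Set.ext fun j => mem_limFinset (hφ · i), ?_⟩
  rintro r ⟨hpre, -, -, hnew⟩
  have havoid : ∀ᶠ m in (D : Filter ℕ),
      ∀ i ∈ Finset.Ico s.length r.s.length, r.s.getD i 0 ∉ φs m i := by
    refine (eventually_all_finset _).2 fun i hi => ?_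
    obtain ⟨hlo, hhi⟩ := Finset.mem_Ico.1 hi
    exact Ultrafilter.eventually_not.2 fun h => hnew i hlo hhi ((mem_limFinset (hφ · i)).2 h)
  filter_upwards [havoid] with m hm
  exact ⟨r.amalgam _, r.amalgam_le_left _,
    EDCond.amalgam_le_right hpre fun i hlo hhi => hm i (Finset.mem_Ico.2 ⟨hlo, hhi⟩)⟩

/-- Ultrafilter limits in eventually different forcing: for a (non-principal) ultrafilter
`D` on `ω` and a sequence `⟨(s,k,φ_m) : m < ω⟩` in the centered piece `Q_{s,k}`, the limit
`(s,k,φ^∞)` with `j ∈ φ^∞(i) ↔ {m : j ∈ φ_m(i)} ∈ D` is well defined (each `φ^∞(i)` has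
size at most `k`, so the limit lies in `Q_{s,k}`), and for every `r ≤ lim^D⟨q_m⟩` the set
`{m : q_m is compatible with r}` belongs to `D`. -/
theorem stmt_12 (D : Ultrafilter ℕ) (hD : ∀ A : Set ℕ, A.Finite → A ∉ D)
    (s : List ℕ) (k : ℕ) (φs : ℕ → ℕ → Finset ℕ) (hφ : ∀ m i, (φs m i).card ≤ k) :
    ∃ (F : ℕ → Finset ℕ) (hF : ∀ i, (F i).card ≤ k),
      (∀ i, (F i : Set ℕ) = {j | {m | j ∈ φs m i} ∈ D}) ∧
      ∀ r : EDCond, EDle r ⟨s, k, F, hF⟩ →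
        {m | ∃ c : EDCond, EDle c r ∧ EDle c ⟨s, k, φs m, hφ m⟩} ∈ D :=
  stmt_12_general D s k φs hφ
end

section
/- The g-prediction forcing PR_g is σ-centered: for each finite data (d, π, f*) consisting of d ∈ 2^{<ω}, a sequence π of finite partial predictors, and a finite set f* of sequences of length |d|, the set Q of all conditions (d, π, F) whose third coordinate F restricts to f* on |d| is centered; any finitely many conditions (d,π,F_i), i < n, in Q have a common extension (d⌢0^N, π, ⋃_{i<n}F_i) for N large enough. -/
/-- A condition `(d, π, F)` of the `g`-prediction forcing `ℙℝ_g`, for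
`g ∈ (ω+1 ∖ 2)^ω` (encoded as `g : ℕ → ℕ∞` with `2 ≤ g n`): `d ∈ 2^{<ω}`; `π` assigns to
each `n ∈ d⁻¹(1)` a finite partial function from `∏_{k<n} g(k)` to `g(n)` (encoded as
`π n : List ℕ → Option ℕ` with finite support, empty unless `d(n) = 1`); `F` is a finite
subset of `∏_{n<ω} g(n)` whose distinct members differ below `|d|`. -/
structure PRCond (g : ℕ → ℕ∞) where
  d : List Bool
  π : ℕ → List ℕ → Option ℕ
  F : Set (ℕ → ℕ)
  hFfin : F.Finite
  hπdom : ∀ n t, π n t ≠ none → n < d.length ∧ d.getD n false = true ∧ t.length = n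
  hπfin : ∀ n, {t | π n t ≠ none}.Finite
  hπval : ∀ n t v, π n t = some v → (v : ℕ∞) < g n
  hmem : ∀ f ∈ F, ∀ n, (f n : ℕ∞) < g n
  hsep : ∀ f ∈ F, ∀ f' ∈ F, (∀ i < d.length, f i = f' i) → f = f'

/-- The order on `ℙℝ_g`: `(d',π',F') ≤ (d,π,F)` iff `d' ⊇ d`, `π'_n ⊇ π_n`, `F' ⊇ F`, and
for every new prediction point `n ∈ (d')⁻¹(1) ∖ d⁻¹(1)` and every `f ∈ F`,
`π'_n(f↾n) = f(n)`. -/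
def PRle {g : ℕ → ℕ∞} (p' p : PRCond g) : Prop :=
  p.d <+: p'.d ∧ (∀ n t v, p.π n t = some v → p'.π n t = some v) ∧ p.F ⊆ p'.F ∧
    ∀ n, p.d.length ≤ n → p'.d.getD n false = true →
      ∀ f ∈ p.F, p'.π n (List.ofFn fun i : Fin n => f i) = some (f n)

/-- The trivial condition. -/
def trivCond (g : ℕ → ℕ∞) : PRCond g where
  d := []
  π := fun _ _ => none
  F := ∅
  hFfin := Set.finite_empty
  hπdom := fun _ _ h => absurd rfl h
  hπfin := fun _ => Set.Finite.subset Set.finite_empty (fun _ ht => (ht rfl).elim)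
  hπval := fun _ _ _ h => by cases h
  hmem := fun _ hf => hf.elim
  hsep := fun _ hf => hf.elim

lemma exists_sep {F : Set (ℕ → ℕ)} (hF : F.Finite) :
    ∃ L, ∀ f ∈ F, ∀ f' ∈ F, (∀ i < L, f i = f' i) → f = f' := by
  classical
  set m : (ℕ → ℕ) × (ℕ → ℕ) → ℕ := fun q =>
    if h : q.1 = q.2 then 0 else Nat.find (Function.ne_iff.mp h) with hm
  obtain ⟨L, hL⟩ := ((hF.prod hF).image m).bddAbove
  refine ⟨L + 1, fun f hf f' hf' hag => ?_⟩
  by_contra hne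
  have h1 : m (f, f') ≤ L := hL (Set.mem_image_of_mem m (Set.mem_prod.mpr ⟨hf, hf'⟩))
  have h2 : m (f, f') = Nat.find (Function.ne_iff.mp hne) := by simp [hm, hne]
  exact Nat.find_spec (Function.ne_iff.mp hne) (hag _ (by omega))

lemma getD_append_lt (d l : List Bool) (n : ℕ) (h : n < d.length) :
    (d ++ l).getD n false = d.getD n false := by
  simp [List.getD, List.getElem?_append_left h]

lemma getD_append_replicate (d : List Bool) (k n : ℕ) (h : d.length ≤ n) :
    (d ++ List.replicate k false).getD n false = false := by
  rcases lt_or_ge n (d.length + k) with h2 | h2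
  · rw [List.getD_eq_getElem?_getD, List.getElem?_append_right h, List.getElem?_replicate]
    simp only [if_pos (by omega : n - d.length < k)]; rfl
  · rw [List.getD_eq_getElem?_getD, List.getElem?_eq_none (by simp; omega)]; rfl

lemma centered (g : ℕ → ℕ∞) (d : List Bool) (π : ℕ → List ℕ → Option ℕ)
    (fstar : Set (List ℕ)) (S : Set (PRCond g)) (hSfin : S.Finite)
    (hS : ∀ p ∈ S, p.d = d ∧ p.π = π ∧
      (fun f : ℕ → ℕ => List.ofFn fun i : Fin d.length => f i) '' p.F = fstar) :
    ∃ r : PRCond g, ∀ p ∈ S, PRle r p := by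
  rcases S.eq_empty_or_nonempty with rfl | ⟨p₀, hp₀⟩
  · exact ⟨trivCond g, fun p hp => hp.elim⟩
  have hFfin : (⋃ p ∈ S, p.F).Finite := hSfin.biUnion (fun p _ => p.hFfin)
  obtain ⟨L, hL⟩ := exists_sep hFfin
  obtain ⟨hd₀, hπ₀, -⟩ := hS p₀ hp₀
  refine ⟨{ d := d ++ List.replicate L false
            π := π
            F := ⋃ p ∈ S, p.F
            hFfin := hFfin
            hπdom := ?_
            hπfin := hπ₀ ▸ p₀.hπfin
            hπval := hπ₀ ▸ p₀.hπval
            hmem := ?_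
            hsep := ?_ }, ?_⟩
  · intro n t h
    have := p₀.hπdom n t (by rw [hπ₀]; exact h)
    rw [hd₀] at this
    refine ⟨by simp; omega, ?_, this.2.2⟩
    rw [getD_append_lt d _ n this.1]; exact this.2.1
  · intro f hf
    obtain ⟨p, hp, hfp⟩ := Set.mem_iUnion₂.mp hf
    exact p.hmem f hfp
  · intro f hf f' hf' hag
    exact hL f hf f' hf' (fun i hi => hag i (by simp; omega))
  · intro p hp
    obtain ⟨hpd, hpπ, -⟩ := hS p hp
    refine ⟨hpd ▸ List.prefix_append d _,
      fun n t v h => show π n t = some v by rw [← hpπ]; exact h,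
      fun f hf => Set.mem_biUnion hp hf, fun n hn htrue f hf => ?_⟩
    exfalso
    rw [getD_append_replicate d L n (hpd ▸ hn)] at htrue
    exact Bool.false_ne_true htrue

/-- Graph of a partial predictor. -/
def graphπ (π : ℕ → List ℕ → Option ℕ) : Set (ℕ × List ℕ × ℕ) :=
  {x | π x.1 x.2.1 = some x.2.2}

lemma graph_inj {π π' : ℕ → List ℕ → Option ℕ} (h : graphπ π = graphπ π') : π = π' := by
  funext n t
  rcases hp : π n t with _ | v <;> rcases hq : π' n t with _ | w
  · rfl
  · have : (n, t, w) ∈ graphπ π := h ▸ (show (n, t, w) ∈ graphπ π' from hq)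
    simp only [graphπ, Set.mem_setOf_eq, hp] at this
    cases this
  · have : (n, t, v) ∈ graphπ π' := h ▸ (show (n, t, v) ∈ graphπ π from hp)
    simp only [graphπ, Set.mem_setOf_eq, hq] at this
    cases this
  · have : (n, t, v) ∈ graphπ π' := h ▸ (show (n, t, v) ∈ graphπ π from hp)
    simp only [graphπ, Set.mem_setOf_eq, hq, Option.some.injEq] at this
    rw [this]

lemma graph_finite {g : ℕ → ℕ∞} (p : PRCond g) : (graphπ p.π).Finite := by
  have hP : {q : ℕ × List ℕ | p.π q.1 q.2 ≠ none}.Finite := by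
    refine Set.Finite.subset (Set.Finite.biUnion (Set.finite_Iio p.d.length)
      (fun n _ => (Set.finite_singleton n).prod (p.hπfin n))) ?_
    rintro ⟨n, t⟩ h
    exact Set.mem_biUnion (p.hπdom n t h).1 ⟨rfl, h⟩
  refine Set.Finite.of_finite_image (f := fun x => (x.1, x.2.1)) (hP.subset ?_) ?_
  · rintro q ⟨⟨n', t', v⟩, hx, rfl⟩
    simp only [Set.mem_setOf_eq]
    rw [show p.π n' t' = some v from hx]
    exact Option.some_ne_none v
  · rintro ⟨n, t, v⟩ hx ⟨n', t', v'⟩ hx' h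
    obtain ⟨rfl, rfl⟩ : n = n' ∧ t = t' := by simpa [Prod.ext_iff] using h
    have hv' : (some v : Option ℕ) = some v' := by
      rw [← (hx : p.π n t = some v)]; exact hx'
    rw [Option.some.injEq] at hv'
    rw [hv']

/-- Data of a condition. -/
def dataOf {g : ℕ → ℕ∞} (p : PRCond g) : List Bool × Set (ℕ × List ℕ × ℕ) × Set (List ℕ) :=
  (p.d, graphπ p.π, (fun f : ℕ → ℕ => List.ofFn fun i : Fin p.d.length => f i) '' p.F)

/-- `ℙℝ_g` is σ-centered: for each datum `(d, π, f*)` the set `Q` of conditions `(d,π,F)`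
with `{f↾|d| : f ∈ F} = f*` is centered (any finitely many members of `Q` have a common
extension, e.g. `(d⌢0^N, π, ⋃ F_i)` for `N` large enough), and `ℙℝ_g` is partitioned into
countably many centered pieces (a coloring `c : ℙℝ_g → ℕ` with centered fibers). -/
theorem stmt_14 (g : ℕ → ℕ∞) (hg : ∀ n, 2 ≤ g n) :
    (∀ (d : List Bool) (π : ℕ → List ℕ → Option ℕ) (fstar : Set (List ℕ))
        (S : Set (PRCond g)), S.Finite →
        (∀ p ∈ S, p.d = d ∧ p.π = π ∧
          (fun f : ℕ → ℕ => List.ofFn fun i : Fin d.length => f i) '' p.F = fstar) →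
        ∃ r : PRCond g, ∀ p ∈ S, PRle r p)
    ∧ ∃ c : PRCond g → ℕ, ∀ S : Set (PRCond g), S.Finite →
        (∃ n, ∀ p ∈ S, c p = n) → ∃ r : PRCond g, ∀ p ∈ S, PRle r p := by
  classical
  refine ⟨centered g, ?_⟩
  -- countable target set
  set T : Set (List Bool × Set (ℕ × List ℕ × ℕ) × Set (List ℕ)) :=
    Set.univ ×ˢ ({A | A.Finite} ×ˢ {B | B.Finite}) with hT
  have hfinc : ∀ (α : Type) [Countable α], {A : Set α | A.Finite}.Countable := by
    intro α _
    refine (Set.countable_setOf_finite_subset (Set.countable_univ)).mono ?_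
    intro A hA
    exact ⟨hA, Set.subset_univ A⟩
  have hTc : T.Countable :=
    Set.countable_univ.prod ((hfinc _).prod (hfinc _))
  have hmemT : ∀ p : PRCond g, dataOf p ∈ T := by
    intro p
    exact ⟨Set.mem_univ _, graph_finite p, p.hFfin.image _⟩
  haveI : Countable T := hTc.to_subtype
  obtain ⟨e, he⟩ := (countable_iff_exists_injective T).mp this
  refine ⟨fun p => e ⟨dataOf p, hmemT p⟩, fun S hSfin hconst => ?_⟩
  rcases S.eq_empty_or_nonempty with rfl | ⟨p₀, hp₀⟩
  · exact ⟨trivCond g, fun p hp => hp.elim⟩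
  obtain ⟨n, hn⟩ := hconst
  have hdata : ∀ p ∈ S, dataOf p = dataOf p₀ := by
    intro p hp
    have h1 : e ⟨dataOf p, hmemT p⟩ = e ⟨dataOf p₀, hmemT p₀⟩ :=
      (hn p hp).trans (hn p₀ hp₀).symm
    exact congrArg Subtype.val (he h1)
  refine centered g p₀.d p₀.π ((fun f : ℕ → ℕ => List.ofFn fun i : Fin p₀.d.length => f i) '' p₀.F)
    S hSfin (fun p hp => ?_)
  have h := hdata p hp
  have hd : p.d = p₀.d := congrArg Prod.fst h
  have hπ : p.π = p₀.π := graph_inj (congrArg (fun x => x.2.1) h)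
  refine ⟨hd, hπ, ?_⟩
  have h3 : (fun f : ℕ → ℕ => List.ofFn fun i : Fin p.d.length => f i) '' p.F =
      (fun f : ℕ → ℕ => List.ofFn fun i : Fin p₀.d.length => f i) '' p₀.F :=
    congrArg (fun x => x.2.2) h
  rw [← h3, hd]
end

section
/- For every function g ∈ (ω∖2)^ω, the g-evasion number 𝔢_g is at most non(N), and dually cov(N) ≤ 𝔭𝔯_g; in particular 𝔢_{ubd} = min{𝔢_g : g ∈ (ω∖2)^ω} ≤ non(N). -/
open Cardinal
open scoped ENNReal

/-- `f` belongs to the cylinder `[t]`. -/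
def CylMem (t : List ℕ) (f : ℕ → ℕ) : Prop := ∀ i < t.length, f i = t.getD i 0

/-- The measure of the cylinder `[t]` under the product of uniform measures on the
`g(k)`'s: `∏_{k<|t|} 1/g(k)`. -/
noncomputable def cylWeight (g : ℕ → ℕ) (t : List ℕ) : ℝ≥0∞ :=
  ∏ k ∈ Finset.range t.length, ((g k : ℝ≥0∞))⁻¹

/-- `S` is null for the product of the uniform measures on the `g(n)`'s: for every
`ε > 0` it is covered by countably many cylinders of total weight at most `ε`. -/
def IsNullIn (g : ℕ → ℕ) (S : Set (ℕ → ℕ)) : Prop :=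
  ∀ ε : ℝ≥0∞, 0 < ε → ∃ c : ℕ → List ℕ,
    (∀ f ∈ S, ∃ n, CylMem (c n) f) ∧ ∑' n, cylWeight g (c n) ≤ ε

/-- The `g`-evasion number `𝔢_g`. -/
noncomputable def evasionNum (g : ℕ → ℕ) : Cardinal :=
  sInf {c | ∃ F : Set (ℕ → ℕ), (∀ f ∈ F, ∀ n, f n < g n) ∧
    (∀ (D : Set ℕ), D.Infinite → ∀ π : (n : ℕ) → (Fin n → ℕ) → ℕ,
      ∃ f ∈ F, ¬ Predicts D π f) ∧ c = #F}

/-- The `g`-prediction number `𝔭𝔯_g`. -/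
noncomputable def predictionNum (g : ℕ → ℕ) : Cardinal :=
  sInf {c | ∃ Ps : Set (Set ℕ × ((n : ℕ) → (Fin n → ℕ) → ℕ)),
    (∀ p ∈ Ps, p.1.Infinite) ∧
    (∀ f : ℕ → ℕ, (∀ n, f n < g n) → ∃ p ∈ Ps, Predicts p.1 p.2 f) ∧ c = #Ps}

/-- `non(N)` for the product measure on `∏_n g(n)`. -/
noncomputable def nonNullNum (g : ℕ → ℕ) : Cardinal :=
  sInf {c | ∃ S : Set (ℕ → ℕ), (∀ f ∈ S, ∀ n, f n < g n) ∧ ¬ IsNullIn g S ∧ c = #S}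

/-- `cov(N)` for the product measure on `∏_n g(n)`. -/
noncomputable def covNullNum (g : ℕ → ℕ) : Cardinal :=
  sInf {c | ∃ A : Set (Set (ℕ → ℕ)), (∀ S ∈ A, IsNullIn g S) ∧
    (∀ f : ℕ → ℕ, (∀ n, f n < g n) → ∃ S ∈ A, f ∈ S) ∧ c = #A}

section Lems
open scoped Classical

variable {g : ℕ → ℕ}

lemma ginv_ne_top (g : ℕ → ℕ) (k : ℕ) : ((g k : ℝ≥0∞)) ≠ ⊤ := ENNReal.natCast_ne_top _

lemma ginv_le (hg : ∀ n, 2 ≤ g n) (k : ℕ) : ((g k : ℝ≥0∞))⁻¹ ≤ 2⁻¹ := by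
  apply ENNReal.inv_le_inv.mpr
  exact_mod_cast hg k

lemma g_ne_zero (hg : ∀ n, 2 ≤ g n) (k : ℕ) : ((g k : ℝ≥0∞)) ≠ 0 := by
  have := hg k
  simp only [ne_eq, Nat.cast_eq_zero]
  omega

lemma cylWeight_le (hg : ∀ n, 2 ≤ g n) (t : List ℕ) :
    cylWeight g t ≤ 2⁻¹ ^ t.length := by
  calc cylWeight g t ≤ ∏ _k ∈ Finset.range t.length, (2⁻¹ : ℝ≥0∞) :=
        Finset.prod_le_prod' fun k _ => ginv_le hg k
    _ = 2⁻¹ ^ t.length := by rw [Finset.prod_const, Finset.card_range]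

/-- relative weight of cylinder `t` above stem `s`. -/
noncomputable def relW (g : ℕ → ℕ) (s t : List ℕ) : ℝ≥0∞ :=
  if (∀ i < min s.length t.length, s.getD i 0 = t.getD i 0)
  then ∏ k ∈ Finset.Ico s.length t.length, ((g k : ℝ≥0∞))⁻¹ else 0

lemma relW_nil (t : List ℕ) : relW g [] t = cylWeight g t := by
  rw [relW, if_pos]
  · simp only [List.length_nil, cylWeight, Finset.range_eq_Ico]
  · intro i hi; simp at hi

lemma relW_one {s t : List ℕ} (hc : ∀ i < min s.length t.length, s.getD i 0 = t.getD i 0)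
    (hl : t.length ≤ s.length) : relW g s t = 1 := by
  rw [relW, if_pos hc, Finset.Ico_eq_empty (by omega), Finset.prod_empty]

lemma relW_step (hg : ∀ n, 2 ≤ g n) (s t : List ℕ) :
    ∑ k ∈ Finset.range (g s.length), ((g s.length : ℝ≥0∞))⁻¹ * relW g (s ++ [k]) t
      ≤ relW g s t := by
  set n := s.length with hn
  have hlen : ∀ k : ℕ, (s ++ [k]).length = n + 1 := by simp [hn]
  have hgetD : ∀ k : ℕ, ∀ i < n, (s ++ [k]).getD i 0 = s.getD i 0 := by
    intro k i hi; exact List.getD_append _ _ _ _ hi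
  have hgetDn : ∀ k : ℕ, (s ++ [k]).getD n 0 = k := by
    intro k; rw [List.getD_append_right _ _ _ _ (le_of_eq hn.symm)]; simp [hn]
  by_cases hc : ∀ i < min n t.length, s.getD i 0 = t.getD i 0
  · by_cases hl : t.length ≤ n
    · -- everything is 1
      have h1 : ∀ k ∈ Finset.range (g n), relW g (s ++ [k]) t = 1 := by
        intro k _
        apply relW_one _ (by rw [hlen]; omega)
        intro i hi
        rw [hlen] at hi
        have hi' : i < n := lt_of_lt_of_le (lt_of_lt_of_le hi (min_le_right _ _)) hl
        rw [hgetD k i hi']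
        exact hc i (by omega)
      rw [relW_one hc hl, Finset.sum_congr rfl (fun k hk => by rw [h1 k hk, mul_one]),
        Finset.sum_const, Finset.card_range, nsmul_eq_mul,
        ENNReal.mul_inv_cancel (g_ne_zero hg n) (ginv_ne_top g n)]
    · push_neg at hl
      set v := t.getD n 0 with hv
      have hzero : ∀ k, k ≠ v → relW g (s ++ [k]) t = 0 := by
        intro k hk
        rw [relW, if_neg]
        push_neg
        exact ⟨n, by rw [hlen]; omega, by rw [hgetDn]; exact hk⟩
      have hone : ∀ k, relW g (s ++ [k]) t ≤ ∏ j ∈ Finset.Ico (n+1) t.length, ((g j : ℝ≥0∞))⁻¹ := by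
        intro k
        rw [relW]
        split
        · rw [hlen]
        · exact zero_le
      calc ∑ k ∈ Finset.range (g n), ((g n : ℝ≥0∞))⁻¹ * relW g (s ++ [k]) t
          ≤ ∑ k ∈ Finset.range (g n), (if v = k then
              ((g n : ℝ≥0∞))⁻¹ * ∏ j ∈ Finset.Ico (n+1) t.length, ((g j : ℝ≥0∞))⁻¹ else 0) := by
            apply Finset.sum_le_sum
            intro k _
            by_cases hk : v = k
            · rw [if_pos hk]
              exact mul_le_mul_right (hone k) _
            · rw [if_neg hk, hzero k (fun h => hk h.symm), mul_zero]
        _ ≤ ((g n : ℝ≥0∞))⁻¹ * ∏ j ∈ Finset.Ico (n+1) t.length, ((g j : ℝ≥0∞))⁻¹ := by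
            rw [Finset.sum_ite_eq]
            split <;> simp
        _ = ∏ j ∈ Finset.Ico n t.length, ((g j : ℝ≥0∞))⁻¹ :=
            (Finset.prod_eq_prod_Ico_succ_bot hl fun j => ((g j : ℝ≥0∞))⁻¹).symm
        _ = relW g s t := by rw [relW, if_pos hc]
  · have hz : ∀ k ∈ Finset.range (g n), ((g n : ℝ≥0∞))⁻¹ * relW g (s ++ [k]) t = 0 := by
      intro k _
      rw [relW, if_neg, mul_zero]
      intro h
      apply hc
      intro i hi
      have hi1 : i < n := by omega
      rw [← hgetD k i hi1]
      exact h i (by rw [hlen]; omega)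
    rw [Finset.sum_eq_zero hz]
    exact zero_le

end Lems

section LemA
open scoped Classical

variable {g : ℕ → ℕ}

noncomputable def rSum (g : ℕ → ℕ) (c : ℕ → List ℕ) (s : List ℕ) : ℝ≥0∞ :=
  ∑' m, relW g s (c m)

lemma rSum_step (hg : ∀ n, 2 ≤ g n) (c : ℕ → List ℕ) (s : List ℕ)
    (h : rSum g c s < 1) : ∃ k, k < g s.length ∧ rSum g c (s ++ [k]) < 1 := by
  by_contra hcon
  push_neg at hcon
  have h1 : (1 : ℝ≥0∞) ≤ ∑ k ∈ Finset.range (g s.length),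
      ((g s.length : ℝ≥0∞))⁻¹ * rSum g c (s ++ [k]) := by
    calc (1 : ℝ≥0∞) = ∑ k ∈ Finset.range (g s.length), ((g s.length : ℝ≥0∞))⁻¹ := by
          rw [Finset.sum_const, Finset.card_range, nsmul_eq_mul,
            ENNReal.mul_inv_cancel (g_ne_zero hg s.length) (ginv_ne_top g s.length)]
      _ ≤ _ := by
          apply Finset.sum_le_sum
          intro k hk
          nth_rewrite 1 [← mul_one (((g s.length : ℝ≥0∞))⁻¹)]
          exact mul_le_mul_right (hcon k (Finset.mem_range.mp hk)) _
  have h2 : ∑ k ∈ Finset.range (g s.length),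
      ((g s.length : ℝ≥0∞))⁻¹ * rSum g c (s ++ [k]) ≤ rSum g c s := by
    have heq : ∀ k, ((g s.length : ℝ≥0∞))⁻¹ * rSum g c (s ++ [k])
        = ∑' m, ((g s.length : ℝ≥0∞))⁻¹ * relW g (s ++ [k]) (c m) := by
      intro k; rw [rSum, ENNReal.tsum_mul_left]
    calc ∑ k ∈ Finset.range (g s.length), ((g s.length : ℝ≥0∞))⁻¹ * rSum g c (s ++ [k])
        = ∑' m, ∑ k ∈ Finset.range (g s.length),
            ((g s.length : ℝ≥0∞))⁻¹ * relW g (s ++ [k]) (c m) := by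
          rw [Finset.sum_congr rfl fun k _ => heq k]
          exact (Summable.tsum_finsetSum fun i _ => ENNReal.summable).symm
      _ ≤ ∑' m, relW g s (c m) := ENNReal.tsum_le_tsum fun m => relW_step hg s (c m)
      _ = rSum g c s := rfl
  exact absurd (lt_of_le_of_lt (h1.trans h2) h) (lt_irrefl _)

/-- the whole product space is not null. -/
lemma not_null_univ (hg : ∀ n, 2 ≤ g n) : ¬ IsNullIn g {f | ∀ n, f n < g n} := by
  intro h
  obtain ⟨c, hcov, hsum⟩ := h 2⁻¹ (by simp)
  let F : List ℕ → List ℕ := fun s =>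
    if h : rSum g c s < 1 then s ++ [(rSum_step hg c s h).choose] else s
  let S : ℕ → List ℕ := fun n => F^[n] []
  have hSsucc : ∀ n, S (n + 1) = F (S n) := fun n => Function.iterate_succ_apply' F n []
  have hS0 : rSum g c [] < 1 := by
    have hle : rSum g c [] ≤ 2⁻¹ := by
      rw [rSum]
      calc ∑' m, relW g [] (c m) = ∑' m, cylWeight g (c m) :=
            tsum_congr fun m => relW_nil (c m)
        _ ≤ 2⁻¹ := hsum
    exact lt_of_le_of_lt hle (by simp [ENNReal.inv_lt_one])
  have key : ∀ n, (S n).length = n ∧ rSum g c (S n) < 1 := by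
    intro n
    induction n with
    | zero => exact ⟨rfl, hS0⟩
    | succ n ih =>
      rw [hSsucc, show F (S n) = S n ++ [(rSum_step hg c (S n) ih.2).choose] from
        dif_pos ih.2]
      refine ⟨by simp [ih.1], ?_⟩
      exact (rSum_step hg c (S n) ih.2).choose_spec.2
  let f : ℕ → ℕ := fun n => (S (n + 1)).getD n 0
  have hSf : ∀ n, ∀ i < n, (S n).getD i 0 = f i := by
    intro n
    induction n with
    | zero => intro i hi; omega
    | succ n ih =>
      intro i hi
      rcases Nat.lt_succ_iff_lt_or_eq.mp hi with hi' | hi'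
      · rw [hSsucc, show F (S n) = S n ++ [(rSum_step hg c (S n) (key n).2).choose] from
          dif_pos (key n).2, List.getD_append _ _ _ _ (by rw [(key n).1]; exact hi')]
        exact ih i hi'
      · subst hi'; rfl
  have hfg : ∀ n, f n < g n := by
    intro n
    have : f n = (rSum_step hg c (S n) (key n).2).choose := by
      show (S (n + 1)).getD n 0 = _
      rw [hSsucc, show F (S n) = S n ++ [(rSum_step hg c (S n) (key n).2).choose] from
        dif_pos (key n).2, List.getD_append_right _ _ _ _ (le_of_eq (key n).1)]
      simp [(key n).1]
    rw [this]
    have h' := (rSum_step hg c (S n) (key n).2).choose_spec.1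
    have hgg : g (S n).length = g n := by rw [(key n).1]
    exact lt_of_lt_of_eq h' hgg
  obtain ⟨m, hm⟩ := hcov f hfg
  set L := (c m).length with hL
  have h1 : relW g (S L) (c m) = 1 := by
    apply relW_one
    · intro i hi
      rw [(key L).1] at hi
      rw [hSf L i (by omega)]
      exact hm i (by omega)
    · rw [(key L).1]
  have h2 : (1 : ℝ≥0∞) ≤ rSum g c (S L) := h1 ▸ ENNReal.le_tsum m
  exact absurd (lt_of_le_of_lt h2 (key L).2) (lt_irrefl _)

end LemA

section LemB
open scoped Classical

variable {g : ℕ → ℕ}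

noncomputable def covF (g : ℕ → ℕ) (π : (n : ℕ) → (Fin n → ℕ) → ℕ) (D' : Finset ℕ) :
    ℕ → Finset (List ℕ)
  | 0 => {[]}
  | (n + 1) =>
      if n ∈ D' then (covF g π D' n).image (fun t => t ++ [π n (fun i => t.getD i 0)])
      else ((covF g π D' n) ×ˢ Finset.range (g n)).image (fun p => p.1 ++ [p.2])

variable {π : (n : ℕ) → (Fin n → ℕ) → ℕ} {D' : Finset ℕ}

lemma covF_len : ∀ n, ∀ t ∈ covF g π D' n, t.length = n := by
  intro n
  induction n with
  | zero => intro t ht; simp [covF] at ht; simp [ht]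
  | succ n ih =>
    intro t ht
    rw [covF] at ht
    split at ht
    · obtain ⟨u, hu, rfl⟩ := Finset.mem_image.mp ht
      simp [ih u hu]
    · obtain ⟨p, hp, rfl⟩ := Finset.mem_image.mp ht
      have := ih p.1 (Finset.mem_product.mp hp).1
      simp [this]

lemma covF_card : ∀ n, (covF g π D' n).card = ∏ k ∈ Finset.range n \ D', g k := by
  intro n
  induction n with
  | zero => simp [covF]
  | succ n ih =>
    rw [covF]
    by_cases hn : n ∈ D'
    · rw [if_pos hn, Finset.card_image_of_injOn, ih, Finset.range_add_one,
        Finset.insert_sdiff_of_mem _ hn]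
      intro t1 h1 t2 h2 he
      have := List.append_inj' he (by simp)
      simpa using this.1
    · rw [if_neg hn, Finset.card_image_of_injOn, Finset.card_product, ih,
        Finset.card_range, Finset.range_add_one, Finset.insert_sdiff_of_notMem _ hn,
        Finset.prod_insert (by simp), mul_comm]
      intro p1 h1 p2 h2 he
      have l1 := covF_len n p1.1 (Finset.mem_product.mp h1).1
      have l2 := covF_len n p2.1 (Finset.mem_product.mp h2).1
      have := List.append_inj he (by omega)
      have h2 : p1.2 = p2.2 := by simpa using this.2
      exact Prod.ext this.1 h2

lemma covF_weight (hg : ∀ n, 2 ≤ g n) (n : ℕ) :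
    ∑ t ∈ covF g π D' n, cylWeight g t = ∏ k ∈ Finset.range n ∩ D', ((g k : ℝ≥0∞))⁻¹ := by
  have hconst : ∀ t ∈ covF g π D' n, cylWeight g t = ∏ k ∈ Finset.range n, ((g k : ℝ≥0∞))⁻¹ := by
    intro t ht; rw [cylWeight, covF_len n t ht]
  rw [Finset.sum_congr rfl hconst, Finset.sum_const, covF_card, nsmul_eq_mul]
  have hsplit : ∏ k ∈ Finset.range n, ((g k : ℝ≥0∞))⁻¹
      = (∏ k ∈ Finset.range n \ D', ((g k : ℝ≥0∞))⁻¹)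
        * ∏ k ∈ Finset.range n ∩ D', ((g k : ℝ≥0∞))⁻¹ := by
    rw [← Finset.sdiff_inter_self_left (Finset.range n) D']
    exact (Finset.prod_sdiff (Finset.inter_subset_left)).symm
  rw [hsplit, ← mul_assoc, Nat.cast_prod, ← Finset.prod_mul_distrib]
  have h1 : ∏ k ∈ Finset.range n \ D', ((g k : ℝ≥0∞)) * ((g k : ℝ≥0∞))⁻¹ = 1 :=
    Finset.prod_eq_one fun k _ => ENNReal.mul_inv_cancel (g_ne_zero hg k) (ginv_ne_top g k)
  rw [h1, one_mul]

lemma covF_mem (f : ℕ → ℕ) (hf : ∀ k, f k < g k)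
    (hπ : ∀ k ∈ D', f k = π k (fun i => f i)) :
    ∀ n, List.ofFn (fun i : Fin n => f i) ∈ covF g π D' n := by
  intro n
  induction n with
  | zero => simp [covF]
  | succ n ih =>
    have hofn : List.ofFn (fun i : Fin (n+1) => f i)
        = List.ofFn (fun i : Fin n => f i) ++ [f n] := by
      rw [List.ofFn_succ']
      simp [List.concat_eq_append]
    have hgetD : (fun i : Fin n => (List.ofFn (fun j : Fin n => f j)).getD i 0)
        = fun i : Fin n => f i := by
      funext i
      rw [List.getD_eq_getElem _ _ (by simp [i.isLt])]
      simp
    rw [covF, hofn]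
    by_cases hn : n ∈ D'
    · rw [if_pos hn]
      apply Finset.mem_image.mpr
      refine ⟨List.ofFn (fun i : Fin n => f i), ih, ?_⟩
      rw [hgetD, ← hπ n hn]
    · rw [if_neg hn]
      apply Finset.mem_image.mpr
      exact ⟨(List.ofFn (fun i : Fin n => f i), f n),
        Finset.mem_product.mpr ⟨ih, Finset.mem_range.mpr (hf n)⟩, rfl⟩

end LemB

section LemB2
open scoped Classical

variable {g : ℕ → ℕ}

set_option maxHeartbeats 1000000 in
lemma predicts_null (hg : ∀ n, 2 ≤ g n) (D : Set ℕ) (hD : D.Infinite)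
    (π : (n : ℕ) → (Fin n → ℕ) → ℕ) :
    IsNullIn g {f | (∀ n, f n < g n) ∧ Predicts D π f} := by
  intro ε hε
  obtain ⟨K0, hK0⟩ := ENNReal.exists_inv_two_pow_lt hε.ne'
  set K := K0 + 3 with hKdef
  have hDm : ∀ m : ℕ, ∃ E : Finset ℕ, ↑E ⊆ D \ Set.Iio m ∧ E.card = m + K :=
    fun m => (hD.diff (Set.finite_Iio m)).exists_subset_card_eq (m + K)
  choose D' hD'sub hD'card using hDm
  set L : ℕ → ℕ := fun m => (D' m).sup id + 1 with hLdef
  have hDL : ∀ m, D' m ⊆ Finset.range (L m) := by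
    intro m k hk
    exact Finset.mem_range.mpr (Nat.lt_succ_of_le (Finset.le_sup (f := id) hk))
  set T : ℕ → Finset (List ℕ) := fun m => covF g π (D' m) (L m) with hTdef
  have hTw : ∀ m, ∑ t ∈ T m, cylWeight g t ≤ 2⁻¹ ^ (m + K) := by
    intro m
    rw [hTdef, covF_weight hg, Finset.inter_comm,
      Finset.inter_eq_left.mpr (hDL m)]
    calc ∏ k ∈ D' m, ((g k : ℝ≥0∞))⁻¹ ≤ ∏ _k ∈ D' m, (2⁻¹ : ℝ≥0∞) :=
          Finset.prod_le_prod' fun k _ => ginv_le hg k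
      _ = 2⁻¹ ^ (m + K) := by rw [Finset.prod_const, hD'card]
  set c' : ℕ → ℕ → List ℕ := fun m i =>
    if h : i < (T m).card then ((T m).equivFin.symm ⟨i, h⟩ : List ℕ)
    else List.replicate (i + m + K) 0 with hc'def
  let e : ℕ ≃ ℕ × ℕ := (Denumerable.eqv (ℕ × ℕ)).symm
  refine ⟨fun n => c' (e n).1 (e n).2, ?_, ?_⟩
  · -- coverage
    rintro f ⟨hfg, hpred⟩
    obtain ⟨b, hb⟩ := hpred.bddAbove
    set m := b + 1 with hmdef
    have hπ : ∀ k ∈ D' m, f k = π k (fun i => f i) := by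
      intro k hk
      have hk' := hD'sub m hk
      by_contra hne
      have : k ∈ {n | n ∈ D ∧ f n ≠ π n (fun i => f i)} := ⟨hk'.1, hne⟩
      have h1 := hb this
      have h2 : ¬ k < m := hk'.2
      omega
    have hmem : List.ofFn (fun i : Fin (L m) => f i) ∈ T m :=
      covF_mem f hfg hπ (L m)
    set j := (T m).equivFin ⟨_, hmem⟩ with hjdef
    refine ⟨e.symm (m, j.val), ?_⟩
    have hcval : c' (e (e.symm (m, j.val))).1 (e (e.symm (m, j.val))).2
        = List.ofFn (fun i : Fin (L m) => f i) := by
      rw [Equiv.apply_symm_apply]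
      show c' m j.val = _
      rw [hc'def]
      simp only [j.isLt, dif_pos]
      have : (⟨j.val, j.isLt⟩ : Fin (T m).card) = j := by ext; rfl
      rw [this, hjdef, Equiv.symm_apply_apply]
    show CylMem (c' (e (e.symm (m, j.val))).1 (e (e.symm (m, j.val))).2) f
    rw [hcval]
    intro i hi
    rw [List.length_ofFn] at hi
    rw [List.getD_eq_getElem _ _ (by rw [List.length_ofFn]; exact hi)]
    simp only [List.getElem_ofFn]
  · -- weight
    have geo : ∑' i : ℕ, (2⁻¹ : ℝ≥0∞) ^ i = 2 := by
      rw [ENNReal.tsum_geometric, ENNReal.one_sub_inv_two, inv_inv]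
    have hper : ∀ m, ∑' i, cylWeight g (c' m i) ≤ 3 * 2⁻¹ ^ (m + K) := by
      intro m
      set u : ℕ → ℝ≥0∞ := fun i =>
        if h : i < (T m).card then cylWeight g ((T m).equivFin.symm ⟨i, h⟩ : List ℕ)
        else 0 with hudef
      have hpt : ∀ i, cylWeight g (c' m i) ≤ u i + 2⁻¹ ^ (i + m + K) := by
        intro i
        rw [hc'def, hudef]
        by_cases h : i < (T m).card
        · simp only [dif_pos h]
          exact le_add_right le_rfl
        · simp only [dif_neg h, zero_add]
          calc cylWeight g (List.replicate (i + m + K) 0)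
              ≤ 2⁻¹ ^ (List.replicate (i + m + K) (0:ℕ)).length := cylWeight_le hg _
            _ = 2⁻¹ ^ (i + m + K) := by rw [List.length_replicate]
      have hu : ∑' i, u i ≤ 2⁻¹ ^ (m + K) := by
        have h1 : ∑' i, u i = ∑ i ∈ Finset.range (T m).card, u i := by
          apply tsum_eq_sum
          intro i hi
          rw [hudef]
          exact dif_neg (fun h => hi (Finset.mem_range.mpr h))
        have h2 : ∑ i ∈ Finset.range (T m).card, u i = ∑ t ∈ T m, cylWeight g t := by
          rw [← Fin.sum_univ_eq_sum_range (fun i => u i) (T m).card]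
          have h3 : ∀ j : Fin (T m).card,
              u j.val = cylWeight g ((T m).equivFin.symm j : List ℕ) := by
            intro j
            rw [hudef]
            simp only [j.isLt, dif_pos]
          rw [Finset.sum_congr rfl fun j _ => h3 j,
            Equiv.sum_comp (T m).equivFin.symm (fun x : (T m) => cylWeight g (x : List ℕ)),
            ← Finset.sum_coe_sort (T m) (cylWeight g)]
        rw [h1, h2]
        exact hTw m
      have hv : ∑' i : ℕ, (2⁻¹ : ℝ≥0∞) ^ (i + m + K) = 2 * 2⁻¹ ^ (m + K) := by
        have : ∀ i : ℕ, (2⁻¹ : ℝ≥0∞) ^ (i + m + K) = 2⁻¹ ^ i * 2⁻¹ ^ (m + K) := by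
          intro i; rw [add_assoc, pow_add]
        rw [tsum_congr this, ENNReal.tsum_mul_right, geo]
      calc ∑' i, cylWeight g (c' m i) ≤ ∑' i, (u i + 2⁻¹ ^ (i + m + K)) :=
            ENNReal.tsum_le_tsum hpt
        _ = (∑' i, u i) + ∑' i : ℕ, (2⁻¹ : ℝ≥0∞) ^ (i + m + K) := ENNReal.tsum_add
        _ ≤ 2⁻¹ ^ (m + K) + 2 * 2⁻¹ ^ (m + K) := by rw [hv]; exact add_le_add hu le_rfl
        _ = 3 * 2⁻¹ ^ (m + K) := by ring
    show ∑' n, cylWeight g (c' (e n).1 (e n).2) ≤ ε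
    calc ∑' n, cylWeight g (c' (e n).1 (e n).2)
        = ∑' p : ℕ × ℕ, cylWeight g (c' p.1 p.2) :=
          Equiv.tsum_eq e (fun p => cylWeight g (c' p.1 p.2))
      _ = ∑' m, ∑' i, cylWeight g (c' m i) := ENNReal.tsum_prod (f := fun m i => cylWeight g (c' m i))
      _ ≤ ∑' m, 3 * (2⁻¹ : ℝ≥0∞) ^ (m + K) := ENNReal.tsum_le_tsum hper
      _ = 3 * (2 * 2⁻¹ ^ K) := by
          rw [ENNReal.tsum_mul_left]
          congr 1
          have : ∀ m : ℕ, (2⁻¹ : ℝ≥0∞) ^ (m + K) = 2⁻¹ ^ m * 2⁻¹ ^ K := fun m => pow_add _ _ _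
          rw [tsum_congr this, ENNReal.tsum_mul_right, geo]
      _ ≤ 8 * 2⁻¹ ^ K := by
          rw [← mul_assoc]
          exact mul_le_mul_left (by norm_num) _
      _ = 2⁻¹ ^ K0 := by
          have h8 : (8 : ℝ≥0∞) * 2⁻¹ ^ 3 = 1 := by
            rw [← ENNReal.inv_pow]
            have : ((2:ℝ≥0∞)) ^ 3 = 8 := by norm_num
            rw [this]
            exact ENNReal.mul_inv_cancel (by norm_num) (by norm_num)
          calc (8:ℝ≥0∞) * 2⁻¹ ^ K = (8 * 2⁻¹ ^ 3) * 2⁻¹ ^ K0 := by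
                rw [hKdef, pow_add]; ring
            _ = 2⁻¹ ^ K0 := by rw [h8, one_mul]
      _ ≤ ε := le_of_lt hK0

end LemB2

lemma isNullIn_mono {g : ℕ → ℕ} {S T : Set (ℕ → ℕ)} (hST : S ⊆ T)
    (hT : IsNullIn g T) : IsNullIn g S := by
  intro ε hε
  obtain ⟨c, hc1, hc2⟩ := hT ε hε
  exact ⟨c, fun f hf => hc1 f (hST hf), hc2⟩

/-- For every `g ∈ (ω∖2)^ω`: `𝔢_g ≤ non(N)`, dually `cov(N) ≤ 𝔭𝔯_g`, and in particular
`𝔢_{ubd} = min{𝔢_{g'} : g' ∈ (ω∖2)^ω} ≤ non(N)`. -/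
theorem stmt_15 (g : ℕ → ℕ) (hg : ∀ n, 2 ≤ g n) :
    evasionNum g ≤ nonNullNum g ∧ covNullNum g ≤ predictionNum g ∧
      (⨅ g' : {g' : ℕ → ℕ // ∀ n, 2 ≤ g' n}, evasionNum g'.1) ≤ nonNullNum g := by
  have h1 : evasionNum g ≤ nonNullNum g := by
    have hne : nonNullNum g ∈ {c | ∃ S : Set (ℕ → ℕ), (∀ f ∈ S, ∀ n, f n < g n) ∧
        ¬ IsNullIn g S ∧ c = #S} := by
      apply csInf_mem
      exact ⟨#({f : ℕ → ℕ | ∀ n, f n < g n}), {f | ∀ n, f n < g n},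
        fun f hf => hf, not_null_univ hg, rfl⟩
    obtain ⟨S, hS1, hS2, hS3⟩ := hne
    rw [hS3]
    apply csInf_le'
    refine ⟨S, hS1, ?_, rfl⟩
    intro D hD π
    by_contra hcon
    push_neg at hcon
    apply hS2
    apply isNullIn_mono (T := {f | (∀ n, f n < g n) ∧ Predicts D π f})
    · intro f hf
      exact ⟨hS1 f hf, hcon f hf⟩
    · exact predicts_null hg D hD π
  refine ⟨h1, ?_, le_trans (ciInf_le' _ (⟨g, hg⟩ : {g' : ℕ → ℕ // ∀ n, 2 ≤ g' n})) h1⟩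
  have hne : predictionNum g ∈ {c | ∃ Ps : Set (Set ℕ × ((n : ℕ) → (Fin n → ℕ) → ℕ)),
      (∀ p ∈ Ps, p.1.Infinite) ∧
      (∀ f : ℕ → ℕ, (∀ n, f n < g n) → ∃ p ∈ Ps, Predicts p.1 p.2 f) ∧ c = #Ps} := by
    apply csInf_mem
    refine ⟨_, {p : Set ℕ × ((n : ℕ) → (Fin n → ℕ) → ℕ) | p.1.Infinite},
      fun p hp => hp, ?_, rfl⟩
    intro f hf
    refine ⟨(Set.univ, fun n _ => f n), Set.infinite_univ, ?_⟩
    have : {n | n ∈ (Set.univ : Set ℕ) ∧ f n ≠ (fun (n : ℕ) (_ : Fin n → ℕ) => f n) n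
        (fun i => f i)} = ∅ := by
      ext n; simp
    rw [Predicts, this]
    exact Set.finite_empty
  obtain ⟨Ps, hPs1, hPs2, hPs3⟩ := hne
  rw [hPs3]
  calc covNullNum g
      ≤ #((fun p : Set ℕ × ((n : ℕ) → (Fin n → ℕ) → ℕ) =>
          {f | (∀ n, f n < g n) ∧ Predicts p.1 p.2 f}) '' Ps) := by
        apply csInf_le'
        refine ⟨_, ?_, ?_, rfl⟩
        · rintro S ⟨p, hp, rfl⟩
          exact predicts_null hg p.1 (hPs1 p hp) p.2
        · intro f hf
          obtain ⟨p, hp, hpred⟩ := hPs2 f hf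
          exact ⟨_, ⟨p, hp, rfl⟩, hf, hpred⟩
    _ ≤ #Ps := Cardinal.mk_image_le
end
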